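/- With the setup as in the context, for every ε > 0 there exists T > 0 such that |D(s,t) − (1/2)·log(t/s)| < ε whenever t ≥ s ≥ T. (This is the estimate showing that, along an earthquake ray, the Hilbert distance between the points at times s and t is asymptotically (1/2)·log(t/s).) -/
import Mathlib


open Filter

/-- The abstract Hilbert distance between two strictly positive vectors:
`D(u,v) = (1/2)·max_i log(v i/u i) + (1/2)·max_i log(u i/v i)`. -/
noncomputable def Dtil {I : Type*} [Fintype I] [Nonempty I] (u v : I → ℝ) : ℝ :=
  (1 / 2) * (Finset.univ.sup' Finset.univ_nonempty fun i => Real.log (v i / u i)) +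
  (1 / 2) * (Finset.univ.sup' Finset.univ_nonempty fun i => Real.log (u i / v i))

/-- Along an (abstracted) earthquake ray with coordinates `g i` of bounded type on `A`
and linear type on `B`, the Hilbert distance between the points at times `s ≤ t` is
asymptotically `(1/2)·log(t/s)`: for every `ε > 0` there is `T > 0` with
`|D(s,t) − (1/2)·log(t/s)| < ε` whenever `t ≥ s ≥ T`. -/
theorem stmt10 {I : Type*} [Fintype I] [Nonempty I]
    (ρ₀ : ℝ) (hρ₀ : 0 < ρ₀)
    (g : I → ℝ → ℝ) (hg : ∀ i, ∀ t : ℝ, 0 ≤ t → 2 * ρ₀ ≤ g i t)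
    (A B : Finset I) (hA : A.Nonempty) (hB : B.Nonempty)
    (hcover : ∀ i : I, i ∈ A ∨ i ∈ B) (hdisj : Disjoint A B)
    (c : I → ℝ)
    (hc : ∀ i ∈ A, 0 < c i ∧ Tendsto (fun t : ℝ => g i t) atTop (nhds (c i)))
    (d : I → ℝ)
    (hd : ∀ i ∈ B, 0 < d i ∧ Tendsto (fun t : ℝ => g i t / t) atTop (nhds (d i))) :
    ∀ ε > 0, ∃ T > 0, ∀ s t : ℝ, T ≤ s → s ≤ t →
      |Dtil (fun i => g i s) (fun i => g i t) - (1 / 2) * Real.log (t / s)| < ε := by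
  intro ε hε
  set δ := ε / 2 with hδdef
  have hδ : 0 < δ := by positivity
  have hgpos : ∀ (i : I) (x : ℝ), 0 ≤ x → 0 < g i x := fun i x hx =>
    lt_of_lt_of_le (by positivity) (hg i x hx)
  have hA' : ∀ i ∈ A, ∀ᶠ x in atTop, |Real.log (g i x) - Real.log (c i)| < δ := by
    intro i hi
    have h := ((hc i hi).2.log (ne_of_gt (hc i hi).1))
    obtain ⟨N, hN⟩ := Metric.tendsto_atTop.1 h δ hδ
    filter_upwards [eventually_ge_atTop N] with x hx
    simpa [Real.dist_eq] using hN x hx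
  have hB' : ∀ i ∈ B, ∀ᶠ x in atTop,
      |Real.log (g i x) - Real.log x - Real.log (d i)| < δ := by
    intro i hi
    have h := ((hd i hi).2.log (ne_of_gt (hd i hi).1))
    obtain ⟨N, hN⟩ := Metric.tendsto_atTop.1 h δ hδ
    filter_upwards [eventually_ge_atTop N, eventually_gt_atTop (0:ℝ)] with x hx hx0
    have hgx := hgpos i x hx0.le
    have := hN x hx
    rw [Real.dist_eq, Real.log_div (ne_of_gt hgx) (ne_of_gt hx0)] at this
    exact this
  have hall : ∀ᶠ x in atTop,
      ((∀ i ∈ A, |Real.log (g i x) - Real.log (c i)| < δ) ∧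
       (∀ i ∈ B, |Real.log (g i x) - Real.log x - Real.log (d i)| < δ)) ∧ 1 ≤ x :=
    (((eventually_all_finset A).2 hA').and ((eventually_all_finset B).2 hB')).and
      (eventually_ge_atTop 1)
  obtain ⟨T₀, hT₀⟩ := eventually_atTop.1 hall
  refine ⟨max T₀ 1, lt_of_lt_of_le one_pos (le_max_right _ _), ?_⟩
  intro s t hs hst
  have hsT₀ : T₀ ≤ s := le_trans (le_max_left _ _) hs
  have htT₀ : T₀ ≤ t := le_trans hsT₀ hst
  obtain ⟨⟨hsA, hsB⟩, hs1⟩ := hT₀ s hsT₀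
  obtain ⟨⟨htA, htB⟩, ht1⟩ := hT₀ t htT₀
  have hs0 : (0:ℝ) < s := lt_of_lt_of_le one_pos hs1
  have ht0 : (0:ℝ) < t := lt_of_lt_of_le one_pos ht1
  have hL : 0 ≤ Real.log t - Real.log s :=
    sub_nonneg.2 (Real.log_le_log hs0 hst)
  set L := Real.log t - Real.log s with hLdef
  -- per-index estimates
  have key1 : ∀ i : I, Real.log (g i t / g i s) < L + 2 * δ := by
    intro i
    rw [Real.log_div (ne_of_gt (hgpos i t ht0.le)) (ne_of_gt (hgpos i s hs0.le))]
    rcases hcover i with hi | hi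
    · have h1 := abs_lt.1 (hsA i hi)
      have h2 := abs_lt.1 (htA i hi)
      linarith [h1.1, h1.2, h2.1, h2.2]
    · have h1 := abs_lt.1 (hsB i hi)
      have h2 := abs_lt.1 (htB i hi)
      linarith [h1.1, h1.2, h2.1, h2.2]
  have key1' : ∀ j ∈ B, L - 2 * δ < Real.log (g j t / g j s) := by
    intro j hj
    rw [Real.log_div (ne_of_gt (hgpos j t ht0.le)) (ne_of_gt (hgpos j s hs0.le))]
    have h1 := abs_lt.1 (hsB j hj)
    have h2 := abs_lt.1 (htB j hj)
    linarith [h1.1, h1.2, h2.1, h2.2]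
  have key2 : ∀ i : I, Real.log (g i s / g i t) < 2 * δ := by
    intro i
    rw [Real.log_div (ne_of_gt (hgpos i s hs0.le)) (ne_of_gt (hgpos i t ht0.le))]
    rcases hcover i with hi | hi
    · have h1 := abs_lt.1 (hsA i hi)
      have h2 := abs_lt.1 (htA i hi)
      linarith [h1.1, h1.2, h2.1, h2.2]
    · have h1 := abs_lt.1 (hsB i hi)
      have h2 := abs_lt.1 (htB i hi)
      linarith [h1.1, h1.2, h2.1, h2.2]
  have key2' : ∀ j ∈ A, -(2 * δ) < Real.log (g j s / g j t) := by
    intro j hj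
    rw [Real.log_div (ne_of_gt (hgpos j s hs0.le)) (ne_of_gt (hgpos j t ht0.le))]
    have h1 := abs_lt.1 (hsA j hj)
    have h2 := abs_lt.1 (htA j hj)
    linarith [h1.1, h1.2, h2.1, h2.2]
  obtain ⟨jB, hjB⟩ := hB
  obtain ⟨jA, hjA⟩ := hA
  unfold Dtil
  set S1 := Finset.univ.sup' Finset.univ_nonempty
    (fun i => Real.log (g i t / g i s)) with hS1def
  set S2 := Finset.univ.sup' Finset.univ_nonempty
    (fun i => Real.log (g i s / g i t)) with hS2def
  have hS1u : S1 < L + 2 * δ :=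
    (Finset.sup'_lt_iff _).2 fun i _ => key1 i
  have hS1l : L - 2 * δ < S1 :=
    lt_of_lt_of_le (key1' jB hjB)
      (Finset.le_sup' (fun i => Real.log (g i t / g i s)) (Finset.mem_univ jB))
  have hS2u : S2 < 2 * δ :=
    (Finset.sup'_lt_iff _).2 fun i _ => key2 i
  have hS2l : -(2 * δ) < S2 :=
    lt_of_lt_of_le (key2' jA hjA)
      (Finset.le_sup' (fun i => Real.log (g i s / g i t)) (Finset.mem_univ jA))
  have hlogts : Real.log (t / s) = L := by
    rw [hLdef, Real.log_div (ne_of_gt ht0) (ne_of_gt hs0)]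
  rw [hlogts]
  rw [abs_lt]
  constructor <;> [nlinarith; nlinarith]
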